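/- Let p, q be positive integers and set a = 2(p+q)n / ((p+q)² + 1). Then the (p,q)-sum-free set S = {(x,y) ∈ {1,...,n}² : a < x + y < (p+q)·a} satisfies |S| ≥ (1 − 2/((p+q)²+1))·n² − C·n for some absolute constant C (independent of n, p, q may appear in C). -/

import Mathlib

open scoped Classical

/-!
If `u, v ∈ S`, the coordinate sum of `p • u + q • v` is at least `(p + q) * a`, so it is not
in `S`. The rest of the grid is the two corner triangles `x + y ≤ a` and `x + y ≥ (p + q) * a`,
with at most `a ^ 2 / 2` and (reflecting through the centre) `(2 * n + 2 - (p + q) * a) ^ 2 / 2`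
lattice points. Writing `s = p + q`, the value `a = 2 * s * n / (s ^ 2 + 1)` minimises
`a ^ 2 + (2 * n - s * a) ^ 2`, which then equals `4 * n ^ 2 / (s ^ 2 + 1)`.
-/

open Finset

def IsSumFree {G : Type*} [AddCommGroup G] (p q : ℤ) (S : Finset G) : Prop :=
  ¬ ∃ u ∈ S, ∃ v ∈ S, ∃ w ∈ S, p • u + q • v = w

theorem isSumFree_filter_strip {G : Type*} [AddCommGroup G] (f : G →+ ℝ) (T : Finset G)
    (p q : ℕ) (a : ℝ) :
    IsSumFree p q (T.filter fun x => a < f x ∧ f x < (p + q : ℝ) * a) := by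
  rintro ⟨u, hu, v, hv, w, hw, rfl⟩
  simp only [mem_filter] at hu hv hw
  have hpu : (p : ℝ) * a ≤ p * f u := mul_le_mul_of_nonneg_left hu.2.1.le p.cast_nonneg
  have hqv : (q : ℝ) * a ≤ q * f v := mul_le_mul_of_nonneg_left hv.2.1.le q.cast_nonneg
  have hw' : f ((p : ℤ) • u + (q : ℤ) • v) = p * f u + q * f v := by simp
  linarith [hw.2.2]

theorem two_mul_card_le_sq_of_add_le (m : ℕ) (s : Finset (ℤ × ℤ))
    (hs : ∀ z ∈ s, 0 < z.1 ∧ 0 < z.2 ∧ z.1 + z.2 ≤ m) : 2 * #s ≤ m ^ 2 := by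
  induction m generalizing s with
  | zero =>
    rw [eq_empty_of_forall_notMem (s := s) fun z hz => by have := hs z hz; omega]
    simp
  | succ m ih =>
    have hlow := ih (s.filter fun z => z.1 + z.2 ≤ (m : ℤ)) fun z hz => by
      rw [mem_filter] at hz; have := hs z hz.1; omega
    have hdiag : #(s.filter fun z => ¬ z.1 + z.2 ≤ (m : ℤ)) ≤ m := by
      calc #(s.filter fun z => ¬ z.1 + z.2 ≤ (m : ℤ)) ≤ #(Icc (1 : ℤ) m) := by
            refine card_le_card_of_injOn Prod.fst (fun z hz => ?_) fun z hz w hw h => ?_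
            · rw [mem_coe, mem_filter] at hz
              have := hs z hz.1
              simp only [coe_Icc, Set.mem_Icc]
              omega
            · rw [mem_coe, mem_filter] at hz hw; have := hs z hz.1; have := hs w hw.1
              exact Prod.ext h (by omega)
        _ = m := by simp
    have := card_filter_add_card_filter_not (s := s) (p := fun z => z.1 + z.2 ≤ (m : ℤ))
    nlinarith

theorem two_mul_card_le_sq_of_add_le_real (a : ℝ) (s : Finset (ℤ × ℤ))
    (hs : ∀ z ∈ s, 0 < z.1 ∧ 0 < z.2 ∧ (z.1 : ℝ) + z.2 ≤ a) : 2 * (#s : ℝ) ≤ a ^ 2 := by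
  have hcount := two_mul_card_le_sq_of_add_le ⌊a⌋₊ s fun z hz => by
    obtain ⟨h1, h2, h3⟩ := hs z hz
    have : z.1 + z.2 ≤ ⌊a⌋ := Int.le_floor.2 (by push_cast; exact h3)
    rw [← Int.floor_toNat]
    omega
  have hfloor : (⌊a⌋₊ : ℝ) ^ 2 ≤ a ^ 2 := by
    rcases le_or_gt 0 a with ha | ha
    · exact pow_le_pow_left₀ (Nat.cast_nonneg _) (Nat.floor_le ha) 2
    · simp [Nat.floor_of_nonpos ha.le]; positivity
  calc 2 * (#s : ℝ) ≤ (⌊a⌋₊ : ℝ) ^ 2 := by exact_mod_cast hcount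
    _ ≤ a ^ 2 := hfloor

theorem two_mul_card_filter_add_le (n : ℤ) (a : ℝ) :
    2 * (#((Icc 1 n ×ˢ Icc 1 n).filter fun z => (z.1 : ℝ) + z.2 ≤ a) : ℝ) ≤ a ^ 2 :=
  two_mul_card_le_sq_of_add_le_real a _ fun z hz => by
    simp only [mem_filter, mem_product, mem_Icc] at hz
    exact ⟨by omega, by omega, hz.2⟩

theorem two_mul_card_filter_le_add (n : ℤ) (b : ℝ) :
    2 * (#((Icc 1 n ×ˢ Icc 1 n).filter fun z => b ≤ (z.1 : ℝ) + z.2) : ℝ) ≤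
      (2 * n + 2 - b) ^ 2 := by
  let r : ℤ × ℤ → ℤ × ℤ := fun z => (n + 1 - z.1, n + 1 - z.2)
  have hr : Function.Injective r := fun z w h => by
    simp only [r, Prod.ext_iff] at h ⊢; omega
  rw [← card_image_of_injective _ hr]
  refine two_mul_card_le_sq_of_add_le_real _ _ fun y hy => ?_
  obtain ⟨z, hz, rfl⟩ := mem_image.1 hy
  dsimp only [r]
  simp only [mem_filter, mem_product, mem_Icc] at hz
  refine ⟨by omega, by omega, ?_⟩
  push_cast
  linarith

theorem card_le_card_filter_Ioo_add_Iic_add_Ici {α : Type*} (s : Finset α) (f : α → ℝ) (a b : ℝ) :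
    #s ≤ #(s.filter fun x => a < f x ∧ f x < b) + #(s.filter fun x => f x ≤ a) +
      #(s.filter fun x => b ≤ f x) := by
  calc #s ≤ #((s.filter fun x => a < f x ∧ f x < b) ∪ (s.filter fun x => f x ≤ a) ∪
        (s.filter fun x => b ≤ f x)) := card_le_card fun x hx => by
          simp only [mem_union, mem_filter]
          grind
    _ ≤ _ := (card_union_le _ _).trans (add_le_add_left (card_union_le _ _) _)

theorem card_Icc_product_Icc (n : ℤ) (hn : 0 ≤ n) : (#(Icc 1 n ×ˢ Icc 1 n) : ℝ) = n ^ 2 := by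
  rw [card_product, Int.card_Icc, add_sub_cancel_right, Nat.cast_mul, ← Int.cast_natCast,
    Int.toNat_of_nonneg hn, sq]

theorem sq_add_sq_corners_le (s n : ℝ) (hn : 1 ≤ n) :
    (2 * s * n / (s ^ 2 + 1)) ^ 2 + (2 * n + 2 - s * (2 * s * n / (s ^ 2 + 1))) ^ 2 ≤
      2 * (2 / (s ^ 2 + 1)) * n ^ 2 + 12 * n := by
  have hd : 1 ≤ s ^ 2 + 1 := by linarith [sq_nonneg s]
  have hcorner : 2 * n + 2 - s * (2 * s * n / (s ^ 2 + 1)) = 2 * n / (s ^ 2 + 1) + 2 := by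
    field_simp; ring
  have hdiv : n / (s ^ 2 + 1) ≤ n := div_le_self (by linarith) hd
  calc _ = 2 * (2 / (s ^ 2 + 1)) * n ^ 2 + 8 * (n / (s ^ 2 + 1)) + 4 := by
        rw [hcorner]; field_simp; ring
    _ ≤ _ := by linarith

theorem stmt_10_general (p q : ℕ) :
    ∃ C : ℝ, ∀ n : ℤ, 1 ≤ n →
    let a : ℝ := 2 * ((p : ℝ) + q) * (n : ℝ) / (((p : ℝ) + q) ^ 2 + 1)
    let S : Finset (ℤ × ℤ) :=
      (Finset.Icc 1 n ×ˢ Finset.Icc 1 n).filter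
        (fun z => a < (z.1 : ℝ) + (z.2 : ℝ) ∧ (z.1 : ℝ) + (z.2 : ℝ) < (p + q : ℝ) * a)
    (¬ ∃ u ∈ S, ∃ v ∈ S, ∃ w ∈ S, (p : ℤ) • u + (q : ℤ) • v = w) ∧
    (1 - 2 / (((p : ℝ) + q) ^ 2 + 1)) * (n : ℝ) ^ 2 - C * (n : ℝ) ≤ (S.card : ℝ) := by
  refine ⟨6, fun n hn => ⟨?_, ?_⟩⟩
  · exact isSumFree_filter_strip ((Int.castAddHom ℝ).comp (AddMonoidHom.fst ℤ ℤ) +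
      (Int.castAddHom ℝ).comp (AddMonoidHom.snd ℤ ℤ)) _ p q _
  · have hkey := sq_add_sq_corners_le ((p : ℝ) + q) n (by exact_mod_cast hn)
    set a : ℝ := 2 * ((p : ℝ) + q) * (n : ℝ) / (((p : ℝ) + q) ^ 2 + 1)
    have hgrid := card_Icc_product_Icc n (by omega)
    have hsplit := card_le_card_filter_Ioo_add_Iic_add_Ici (Icc 1 n ×ˢ Icc 1 n)
      (fun z => (z.1 : ℝ) + z.2) a ((p + q : ℝ) * a)
    have hlow := two_mul_card_filter_add_le n a
    have hhigh := two_mul_card_filter_le_add n ((p + q : ℝ) * a)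
    have hsplit' := (Nat.cast_le (α := ℝ)).2 hsplit
    push_cast [hgrid] at hsplit'
    linarith

theorem stmt_10 (p q : ℕ) (hp : 0 < p) (hq : 0 < q) :
    ∃ C : ℝ, ∀ n : ℤ, 1 ≤ n →
    let a : ℝ := 2 * ((p : ℝ) + q) * (n : ℝ) / (((p : ℝ) + q) ^ 2 + 1)
    let S : Finset (ℤ × ℤ) :=
      (Finset.Icc 1 n ×ˢ Finset.Icc 1 n).filter
        (fun z => a < (z.1 : ℝ) + (z.2 : ℝ) ∧ (z.1 : ℝ) + (z.2 : ℝ) < (p + q : ℝ) * a)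
    (¬ ∃ u ∈ S, ∃ v ∈ S, ∃ w ∈ S, (p : ℤ) • u + (q : ℤ) • v = w) ∧
    (1 - 2 / (((p : ℝ) + q) ^ 2 + 1)) * (n : ℝ) ^ 2 - C * (n : ℝ) ≤ (S.card : ℝ) :=
  stmt_10_general p q
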